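/- Let q, a, b be positive integers with gcd(a,b) = 1, let α, β, γ, δ ∈ ℂ with |Re(c)| < 1/4 for each c ∈ {α,β,γ,δ}, and let 𝒢 be an even entire function with 𝒢(0) = 1 which has exponential decay in every vertical strip |Re(s)| ≤ C. Then ∑_{m,n ≥ 1, ma = nb} σ_{α,β}(m) σ_{γ,δ}(n) (mn)^{−1/2} V_{α,β,γ,δ}(mn/q²) = (1/(2πi)) ∫_{Re(s)=2} (𝒢(s)/s) g_{α,β,γ,δ}(s) q^{2s} Z_{α,β,γ,δ}(a,b,s) ds, where the left-hand double series and the series defining Z on the contour converge absolutely. -/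

import Mathlib

open Complex MeasureTheory

/-- `σ_{α,β}(n) = ∑_{ad=n} a^{-α} d^{-β}`. -/
noncomputable def sigmaC (α β : ℂ) (n : ℕ) : ℂ :=
  ∑ d ∈ n.divisors, ((n / d : ℕ) : ℂ) ^ (-α) * (d : ℂ) ^ (-β)

/-- `g_{α,β,γ,δ}(s)`. -/
noncomputable def gfun (α β γ δ s : ℂ) : ℂ :=
  (Real.pi : ℂ) ^ (-2 * s) *
    (Complex.Gamma ((1/2 + α + s)/2) * Complex.Gamma ((1/2 + β + s)/2) *
      Complex.Gamma ((1/2 + γ + s)/2) * Complex.Gamma ((1/2 + δ + s)/2)) /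
    (Complex.Gamma ((1/2 + α)/2) * Complex.Gamma ((1/2 + β)/2) *
      Complex.Gamma ((1/2 + γ)/2) * Complex.Gamma ((1/2 + δ)/2))

/-- `V_{α,β,γ,δ}(x) = (1/(2πi)) ∫_{Re(s)=2} (𝒢(s)/s) g_{α,β,γ,δ}(s) x^{−s} ds`. -/
noncomputable def Vfun (G : ℂ → ℂ) (α β γ δ : ℂ) (x : ℝ) : ℂ :=
  (1 / (2 * (Real.pi : ℂ) * I)) *
    (I * ∫ t : ℝ, (G (2 + t * I) / (2 + t * I)) * gfun α β γ δ (2 + t * I) *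
      (x : ℂ) ^ (-(2 + t * I)))

/-- `𝒢` has exponential decay in every vertical strip `|Re(s)| ≤ C`. -/
def ExpDecayStrips (G : ℂ → ℂ) : Prop :=
  ∀ C > (0 : ℝ), ∃ A > (0 : ℝ), ∃ c > (0 : ℝ),
    ∀ s : ℂ, |s.re| ≤ C → ‖G s‖ ≤ A * Real.exp (-c * |s.im|)

/-- Term of the Dirichlet series `Z_{α,β,γ,δ}(a,b,s)`. -/
noncomputable def Zterm (α β γ δ : ℂ) (a b : ℕ) (s : ℂ) (n : ℕ) : ℂ :=
  sigmaC α β (b * n) * sigmaC γ δ (a * n) *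
    (a : ℂ) ^ (-(1/2 + s)) * (b : ℂ) ^ (-(1/2 + s)) * (n : ℂ) ^ (-(1 + 2 * s))

/-!
Since `gcd(a, b) = 1`, the diagonal `m a = n b` is exactly `{(b k, a k) : k ∈ ℕ}`, and there
`(m n)^{-1/2} (m n / q²)^{-s} = q^{2s} a^{-(1/2+s)} b^{-(1/2+s)} k^{-(1+2s)}`. Hence the `k`-th
diagonal term is the contour integral of `(𝒢(s)/s) g(s) q^{2s}` times the `k`-th term of
`Z(a, b, s)`. On `Re s = 2` the trivial bound `|σ_{α,β}(m)| ≤ m^{3/2}` makes that term `O(k⁻²)`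
uniformly in `t`, while `𝒢` decays exponentially and `g` is bounded, so dominated convergence
moves the sum over `k` inside the integral.
-/

open Set Filter

lemma integrable_exp_neg_mul_abs {c : ℝ} (hc : 0 < c) :
    Integrable (fun t : ℝ => Real.exp (-c * |t|)) := by
  have hIoi : IntegrableOn (fun t : ℝ => Real.exp (-c * |t|)) (Ioi 0) :=
    (exp_neg_integrableOn_Ioi 0 hc).congr_fun (fun t ht => by rw [abs_of_pos ht])
      measurableSet_Ioi
  rw [← integrableOn_univ, ← Iio_union_Ici (a := (0 : ℝ)), integrableOn_union,
    integrableOn_Ici_iff_integrableOn_Ioi]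
  refine ⟨?_, hIoi⟩
  rw [← (Measure.measurePreserving_neg (volume : Measure ℝ)).integrableOn_comp_preimage
      (Homeomorph.neg ℝ).measurableEmbedding]
  simpa only [Function.comp_def, abs_neg, neg_preimage, neg_Iio, neg_zero] using hIoi

lemma ExpDecayStrips.integrable_vertical_line {G : ℂ → ℂ} (hdecay : ExpDecayStrips G)
    (hG : Continuous G) (σ : ℝ) : Integrable (fun t : ℝ => G (σ + t * I)) := by
  obtain ⟨A, -, c, hc, hbound⟩ := hdecay (|σ| + 1) (by positivity)
  refine ((integrable_exp_neg_mul_abs hc).const_mul A).mono'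
    (by fun_prop) (ae_of_all _ fun t => ?_)
  simpa using hbound (σ + t * I) (by simp)

lemma Complex.norm_Gamma_le_Gamma_re {z : ℂ} (hz : 0 < z.re) :
    ‖Gamma z‖ ≤ Real.Gamma z.re := by
  rw [Gamma_eq_integral hz, Real.Gamma_eq_integral hz, GammaIntegral]
  refine (norm_integral_le_integral_norm _).trans_eq <|
    setIntegral_congr_fun measurableSet_Ioi fun x hx => ?_
  rw [norm_mul, norm_real, Real.norm_of_nonneg (Real.exp_pos _).le,
    norm_cpow_eq_rpow_re_of_pos hx, sub_re, one_re]

lemma Complex.differentiableAt_Gamma_of_re_pos {z : ℂ} (hz : 0 < z.re) :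
    DifferentiableAt ℂ Gamma z :=
  differentiableAt_Gamma z fun m hm => by
    rw [hm, neg_re, natCast_re] at hz
    linarith [m.cast_nonneg (α := ℝ)]

@[simp]
lemma sigmaC_zero (α β : ℂ) : sigmaC α β 0 = 0 := by
  simp [sigmaC]

lemma norm_natCast_cpow_le_rpow {x m : ℕ} {w : ℂ} {θ : ℝ} (hx : 0 < x) (hxm : x ≤ m)
    (hθ : 0 ≤ θ) (hw : w.re ≤ θ) : ‖(x : ℂ) ^ w‖ ≤ (m : ℝ) ^ θ := by
  have hx1 : (1 : ℝ) ≤ x := by exact_mod_cast hx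
  rw [norm_natCast_cpow_of_pos hx]
  calc (x : ℝ) ^ w.re ≤ (x : ℝ) ^ θ := Real.rpow_le_rpow_of_exponent_le hx1 hw
    _ ≤ (m : ℝ) ^ θ := Real.rpow_le_rpow (by positivity) (by exact_mod_cast hxm) hθ

lemma norm_sigmaC_le {α β : ℂ} {θ : ℝ} (hθ : 0 ≤ θ) (hα : -α.re ≤ θ) (hβ : -β.re ≤ θ)
    (m : ℕ) : ‖sigmaC α β m‖ ≤ (m : ℝ) ^ (1 + 2 * θ) := by
  rcases m.eq_zero_or_pos with rfl | hm
  · simpa using Real.rpow_nonneg le_rfl (1 + 2 * θ)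
  have hterm : ∀ d ∈ m.divisors,
      ‖((m / d : ℕ) : ℂ) ^ (-α) * (d : ℂ) ^ (-β)‖ ≤ (m : ℝ) ^ θ * (m : ℝ) ^ θ := by
    intro d hd
    have hdm : d ≤ m := Nat.divisor_le hd
    rw [norm_mul]
    exact mul_le_mul
      (norm_natCast_cpow_le_rpow (Nat.div_pos hdm (Nat.pos_of_mem_divisors hd))
        (Nat.div_le_self m d) hθ (by simpa using hα))
      (norm_natCast_cpow_le_rpow (Nat.pos_of_mem_divisors hd) hdm hθ (by simpa using hβ))
      (norm_nonneg _) (by positivity)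
  calc ‖sigmaC α β m‖ ≤ ∑ d ∈ m.divisors, (m : ℝ) ^ θ * (m : ℝ) ^ θ :=
        (norm_sum_le _ _).trans (Finset.sum_le_sum hterm)
    _ ≤ m * ((m : ℝ) ^ θ * (m : ℝ) ^ θ) := by
        rw [Finset.sum_const, nsmul_eq_mul]
        gcongr
        exact_mod_cast Nat.card_divisors_le_self m
    _ = (m : ℝ) ^ (1 + 2 * θ) := by
        have hm' : (0 : ℝ) < m := by exact_mod_cast hm
        rw [Real.rpow_add hm', Real.rpow_one, two_mul, Real.rpow_add hm']

section Zterm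

variable {α β γ δ : ℂ} {a b : ℕ}

lemma Zterm_eq_zero (s : ℂ) {n : ℕ} (h : a = 0 ∨ b = 0 ∨ n = 0) :
    Zterm α β γ δ a b s n = 0 := by
  rcases h with rfl | rfl | rfl <;> simp [Zterm]

lemma norm_Zterm_le (hα : -α.re ≤ 1/4) (hβ : -β.re ≤ 1/4) (hγ : -γ.re ≤ 1/4)
    (hδ : -δ.re ≤ 1/4) {s : ℂ} (hs : s.re = 2) (n : ℕ) :
    ‖Zterm α β γ δ a b s n‖ ≤ (n : ℝ) ^ (-2 : ℝ) := by
  by_cases h0 : a = 0 ∨ b = 0 ∨ n = 0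
  · rw [Zterm_eq_zero s h0, norm_zero]
    positivity
  obtain ⟨ha, hb, hn⟩ : a ≠ 0 ∧ b ≠ 0 ∧ n ≠ 0 := by tauto
  have ha' : (0 : ℝ) < a := by positivity
  have hb' : (0 : ℝ) < b := by positivity
  have hn' : (0 : ℝ) < n := by positivity
  have hσ : ∀ (c d : ℂ) (m : ℕ), -c.re ≤ 1/4 → -d.re ≤ 1/4 →
      ‖sigmaC c d m‖ ≤ (m : ℝ) ^ (3/2 : ℝ) := fun c d m hc hd =>
    (norm_sigmaC_le (by norm_num) hc hd m).trans_eq (by norm_num)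
  have hre₁ : (-(1/2 + s)).re = -(5/2) := by simp [hs]; norm_num
  have hre₂ : (-(1 + 2 * s)).re = -5 := by simp [hs]; norm_num
  calc ‖Zterm α β γ δ a b s n‖
      = ‖sigmaC α β (b * n)‖ * ‖sigmaC γ δ (a * n)‖ * (a : ℝ) ^ (-(5/2) : ℝ) *
          (b : ℝ) ^ (-(5/2) : ℝ) * (n : ℝ) ^ (-5 : ℝ) := by
        simp only [Zterm, norm_mul, norm_natCast_cpow_of_pos (Nat.pos_of_ne_zero ha),
          norm_natCast_cpow_of_pos (Nat.pos_of_ne_zero hb),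
          norm_natCast_cpow_of_pos (Nat.pos_of_ne_zero hn), hre₁, hre₂]
    _ ≤ ((b * n : ℕ) : ℝ) ^ (3/2 : ℝ) * ((a * n : ℕ) : ℝ) ^ (3/2 : ℝ) * (a : ℝ) ^ (-(5/2) : ℝ) *
          (b : ℝ) ^ (-(5/2) : ℝ) * (n : ℝ) ^ (-5 : ℝ) := by
        gcongr
        exacts [hσ α β _ hα hβ, hσ γ δ _ hγ hδ]
    _ = (a : ℝ) ^ (-1 : ℝ) * (b : ℝ) ^ (-1 : ℝ) * (n : ℝ) ^ (-2 : ℝ) := by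
        push_cast
        rw [Real.mul_rpow hb'.le hn'.le, Real.mul_rpow ha'.le hn'.le,
          show (-1 : ℝ) = 3/2 + -(5/2) by norm_num, show (-2 : ℝ) = 3/2 + 3/2 + -5 by norm_num,
          Real.rpow_add ha', Real.rpow_add hb', Real.rpow_add hn', Real.rpow_add hn']
        ring
    _ ≤ (n : ℝ) ^ (-2 : ℝ) := by
        have hle : ∀ {m : ℕ}, m ≠ 0 → (m : ℝ) ^ (-1 : ℝ) ≤ 1 := fun hm =>
          Real.rpow_le_one_of_one_le_of_nonpos (by exact_mod_cast Nat.one_le_iff_ne_zero.2 hm)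
            (by norm_num)
        exact mul_le_of_le_one_left (by positivity)
          (mul_le_one₀ (hle ha) (by positivity) (hle hb))

lemma summable_Zterm (hα : -α.re ≤ 1/4) (hβ : -β.re ≤ 1/4) (hγ : -γ.re ≤ 1/4)
    (hδ : -δ.re ≤ 1/4) {s : ℂ} (hs : s.re = 2) : Summable (Zterm α β γ δ a b s) :=
  .of_norm_bounded (Real.summable_nat_rpow.2 (by norm_num)) (norm_Zterm_le hα hβ hγ hδ hs)

lemma continuous_Zterm (n : ℕ) : Continuous (fun s => Zterm α β γ δ a b s n) := by
  by_cases h0 : a = 0 ∨ b = 0 ∨ n = 0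
  · simp only [Zterm_eq_zero _ h0]
    exact continuous_const
  obtain ⟨ha, hb, hn⟩ : a ≠ 0 ∧ b ≠ 0 ∧ n ≠ 0 := by tauto
  have hcpow : ∀ {m : ℕ}, m ≠ 0 → ∀ {f : ℂ → ℂ}, Continuous f →
      Continuous fun s => (m : ℂ) ^ f s := fun hm _ hf =>
    hf.const_cpow (Or.inl (Nat.cast_ne_zero.2 hm))
  exact ((continuous_const.mul (hcpow ha (by fun_prop))).mul (hcpow hb (by fun_prop))).mul
    (hcpow hn (by fun_prop))

end Zterm

section gfun

variable {α β γ δ : ℂ}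

lemma re_Gamma_arg_line (c : ℂ) (t : ℝ) :
    ((1/2 + c + (2 + t * I)) / 2).re = (5/2 + c.re) / 2 := by
  simp [div_ofNat_re]; ring

lemma continuous_Gamma_line {c : ℂ} (hc : -(5/2) < c.re) :
    Continuous fun t : ℝ => Gamma ((1/2 + c + (2 + t * I)) / 2) :=
  continuous_iff_continuousAt.2 fun t =>
    (differentiableAt_Gamma_of_re_pos (by rw [re_Gamma_arg_line]; linarith)).continuousAt.comp
      (by fun_prop)

lemma norm_Gamma_line_le {c : ℂ} (hc : -(5/2) < c.re) (t : ℝ) :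
    ‖Gamma ((1/2 + c + (2 + t * I)) / 2)‖ ≤ Real.Gamma ((5/2 + c.re) / 2) := by
  simpa only [re_Gamma_arg_line] using norm_Gamma_le_Gamma_re
    (z := (1/2 + c + (2 + t * I)) / 2) (by rw [re_Gamma_arg_line]; linarith)

variable (hα : -(5/2) < α.re) (hβ : -(5/2) < β.re) (hγ : -(5/2) < γ.re) (hδ : -(5/2) < δ.re)
include hα hβ hγ hδ

lemma continuous_gfun_line : Continuous fun t : ℝ => gfun α β γ δ (2 + t * I) := by
  unfold gfun
  refine Continuous.div_const (Continuous.mul ?_ ?_) _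
  · exact Continuous.const_cpow (by fun_prop) (Or.inl (ofReal_ne_zero.2 Real.pi_ne_zero))
  · exact (((continuous_Gamma_line hα).mul (continuous_Gamma_line hβ)).mul
      (continuous_Gamma_line hγ)).mul (continuous_Gamma_line hδ)

lemma exists_norm_gfun_line_le : ∃ C, ∀ t : ℝ, ‖gfun α β γ δ (2 + t * I)‖ ≤ C := by
  refine ⟨Real.pi ^ (-4 : ℝ) *
      (Real.Gamma ((5/2 + α.re) / 2) * Real.Gamma ((5/2 + β.re) / 2) *
        Real.Gamma ((5/2 + γ.re) / 2) * Real.Gamma ((5/2 + δ.re) / 2)) /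
      ‖Gamma ((1/2 + α) / 2) * Gamma ((1/2 + β) / 2) * Gamma ((1/2 + γ) / 2) *
        Gamma ((1/2 + δ) / 2)‖, fun t => ?_⟩
  have hpi : ‖(Real.pi : ℂ) ^ (-2 * (2 + t * I))‖ = Real.pi ^ (-4 : ℝ) := by
    rw [norm_cpow_eq_rpow_re_of_pos Real.pi_pos]
    norm_num
  rw [gfun, norm_div, norm_mul, hpi, norm_mul, norm_mul, norm_mul]
  have hΓ : ∀ {c : ℂ}, -(5/2) < c.re → 0 ≤ Real.Gamma ((5/2 + c.re) / 2) := fun hc =>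
    (Real.Gamma_pos_of_pos (by linarith)).le
  gcongr
  · exact mul_nonneg (mul_nonneg (hΓ hα) (hΓ hβ)) (hΓ hγ)
  · exact mul_nonneg (hΓ hα) (hΓ hβ)
  · exact hΓ hα
  exacts [norm_Gamma_line_le hα t, norm_Gamma_line_le hβ t, norm_Gamma_line_le hγ t,
    norm_Gamma_line_le hδ t]

lemma integrable_div_mul_gfun_line {G : ℂ → ℂ} (hG : Continuous G) (hdecay : ExpDecayStrips G) :
    Integrable fun t : ℝ => G (2 + t * I) / (2 + t * I) * gfun α β γ δ (2 + t * I) := by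
  obtain ⟨C, hC⟩ := exists_norm_gfun_line_le hα hβ hγ hδ
  have hline : ∀ t : ℝ, (1 : ℝ) ≤ ‖(2 + t * I : ℂ)‖ := fun t => by
    have := abs_re_le_norm (2 + t * I : ℂ)
    simp only [add_re, re_ofNat, mul_re, ofReal_re, I_re, ofReal_im, I_im] at this
    norm_num at this
    linarith
  have hne : ∀ t : ℝ, (2 + t * I : ℂ) ≠ 0 := fun t => norm_pos_iff.1 (by linarith [hline t])
  have := (hdecay.integrable_vertical_line hG 2).mul_bdd
    (((continuous_gfun_line hα hβ hγ hδ).div (by fun_prop) hne).aestronglyMeasurable)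
    (ae_of_all _ fun t => (norm_div _ _).trans_le
      ((div_le_self (norm_nonneg _) (hline t)).trans (hC t)))
  refine this.congr (ae_of_all _ fun t => ?_)
  simp only [ofReal_ofNat, Pi.div_apply]
  ring

end gfun

lemma ofReal_cpow_diagonal {x y z w : ℝ} (hx : 0 < x) (hy : 0 < y) (hz : 0 < z) (hw : 0 < w)
    (s : ℂ) :
    ((y * z * (x * z) : ℝ) : ℂ) ^ (-(1 : ℂ)/2) * ((y * z * (x * z) / w ^ 2 : ℝ) : ℂ) ^ (-s) =
      (w : ℂ) ^ (2 * s) *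
        ((x : ℂ) ^ (-(1/2 + s)) * (y : ℂ) ^ (-(1/2 + s)) * (z : ℂ) ^ (-(1 + 2 * s))) := by
  have hN : 0 < y * z * (x * z) := by positivity
  have hNw : 0 < y * z * (x * z) / w ^ 2 := by positivity
  simp only [cpow_def_of_ne_zero (ofReal_ne_zero.2 hN.ne'),
    cpow_def_of_ne_zero (ofReal_ne_zero.2 hNw.ne'), cpow_def_of_ne_zero (ofReal_ne_zero.2 hw.ne'),
    cpow_def_of_ne_zero (ofReal_ne_zero.2 hx.ne'), cpow_def_of_ne_zero (ofReal_ne_zero.2 hy.ne'),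
    cpow_def_of_ne_zero (ofReal_ne_zero.2 hz.ne'), ← ofReal_log hN.le, ← ofReal_log hNw.le,
    ← ofReal_log hw.le, ← ofReal_log hx.le, ← ofReal_log hy.le, ← ofReal_log hz.le, ← exp_add]
  congr 1
  rw [Real.log_div hN.ne' (by positivity), Real.log_mul (by positivity) (by positivity),
    Real.log_mul hy.ne' hz.ne', Real.log_mul hx.ne' hz.ne', Real.log_pow]
  push_cast
  ring

lemma diagonal_summand_eq {q : ℕ} (hq : 0 < q) (α β γ δ : ℂ) (a b : ℕ) (s : ℂ) (k : ℕ) :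
    sigmaC α β (b * k) * sigmaC γ δ (a * k) * ((b * k * (a * k) : ℕ) : ℂ) ^ (-(1 : ℂ)/2) *
        ((((b * k * (a * k) : ℕ) : ℝ) / (q : ℝ) ^ 2 : ℝ) : ℂ) ^ (-s) =
      (q : ℂ) ^ (2 * s) * Zterm α β γ δ a b s k := by
  by_cases h0 : a = 0 ∨ b = 0 ∨ k = 0
  · rw [Zterm_eq_zero s h0]
    rcases h0 with rfl | rfl | rfl <;> simp
  obtain ⟨ha, hb, hk⟩ : a ≠ 0 ∧ b ≠ 0 ∧ k ≠ 0 := by tauto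
  have hcpow := ofReal_cpow_diagonal (x := a) (y := b) (z := k) (w := q) (by positivity)
    (by positivity) (by positivity) (by positivity) s
  push_cast at hcpow ⊢
  rw [Zterm]
  linear_combination (sigmaC α β (b * k) * sigmaC γ δ (a * k)) * hcpow

lemma diagonal_term_eq_integral {q : ℕ} (hq : 0 < q) (α β γ δ : ℂ) (a b : ℕ) (G : ℂ → ℂ)
    (k : ℕ) :
    sigmaC α β (b * k) * sigmaC γ δ (a * k) * ((b * k * (a * k) : ℕ) : ℂ) ^ (-(1 : ℂ)/2) *
        Vfun G α β γ δ ((b * k * (a * k) : ℕ) / (q : ℝ) ^ 2) =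
      1 / (2 * (Real.pi : ℂ) * I) * (I * ∫ t : ℝ, G (2 + t * I) / (2 + t * I) *
        gfun α β γ δ (2 + t * I) * (q : ℂ) ^ (2 * (2 + t * I)) *
          Zterm α β γ δ a b (2 + t * I) k) := by
  have hintegral : (∫ t : ℝ, G (2 + t * I) / (2 + t * I) * gfun α β γ δ (2 + t * I) *
        (q : ℂ) ^ (2 * (2 + t * I)) * Zterm α β γ δ a b (2 + t * I) k) =
      sigmaC α β (b * k) * sigmaC γ δ (a * k) * ((b * k * (a * k) : ℕ) : ℂ) ^ (-(1 : ℂ)/2) *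
        ∫ t : ℝ, G (2 + t * I) / (2 + t * I) * gfun α β γ δ (2 + t * I) *
          ((((b * k * (a * k) : ℕ) : ℝ) / (q : ℝ) ^ 2 : ℝ) : ℂ) ^ (-(2 + t * I)) := by
    rw [← integral_const_mul]
    congr 1
    funext t
    linear_combination (G (2 + t * I) / (2 + t * I) * gfun α β γ δ (2 + t * I)) *
      (diagonal_summand_eq hq α β γ δ a b (2 + t * I) k).symm
  rw [hintegral, Vfun]
  ring

lemma Nat.Coprime.exists_of_mul_eq_mul {a b m n : ℕ} (hab : a.Coprime b) (hb : 0 < b)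
    (h : m * a = n * b) : ∃ k, b * k = m ∧ a * k = n := by
  obtain ⟨k, rfl⟩ : b ∣ m := hab.symm.dvd_of_dvd_mul_right ⟨n, by rw [h, mul_comm]⟩
  refine ⟨k, rfl, Nat.eq_of_mul_eq_mul_right hb ?_⟩
  rw [← h]
  ring

lemma hasSum_integral_Zterm {α β γ δ : ℂ} (hα : -α.re ≤ 1/4) (hβ : -β.re ≤ 1/4)
    (hγ : -γ.re ≤ 1/4) (hδ : -δ.re ≤ 1/4) (q a b : ℕ) {G : ℂ → ℂ} (hG : Continuous G)
    (hdecay : ExpDecayStrips G) :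
    HasSum (fun k => ∫ t : ℝ, G (2 + t * I) / (2 + t * I) * gfun α β γ δ (2 + t * I) *
        (q : ℂ) ^ (2 * (2 + t * I)) * Zterm α β γ δ a b (2 + t * I) k)
      (∫ t : ℝ, G (2 + t * I) / (2 + t * I) * gfun α β γ δ (2 + t * I) *
        (q : ℂ) ^ (2 * (2 + t * I)) * ∑' n : ℕ, Zterm α β γ δ a b (2 + t * I) n) := by
  have hF := integrable_div_mul_gfun_line (α := α) (β := β) (γ := γ) (δ := δ)
    (by linarith) (by linarith) (by linarith) (by linarith) hG hdecay
  have hre : ∀ t : ℝ, (2 + t * I : ℂ).re = 2 := fun t => by simp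
  have hq : ∀ t : ℝ, ‖(q : ℂ) ^ (2 * (2 + t * I))‖ = (q : ℝ) ^ (4 : ℝ) := fun t => by
    rw [norm_natCast_cpow_of_re_ne_zero _ (by simp)]
    norm_num
  refine hasSum_integral_of_dominated_convergence
    (fun k t => ‖G (2 + t * I) / (2 + t * I) * gfun α β γ δ (2 + t * I)‖ * (q : ℝ) ^ (4 : ℝ) *
      (k : ℝ) ^ (-2 : ℝ)) (fun k => ?_) (fun k => ae_of_all _ fun t => ?_)
    (ae_of_all _ fun t => (Real.summable_nat_rpow.2 (by norm_num)).mul_left _) ?_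
    (ae_of_all _ fun t => (summable_Zterm hα hβ hγ hδ (hre t)).hasSum.mul_left _)
  · refine (hF.aestronglyMeasurable.mul ?_).mul ?_
    · exact (Continuous.const_cpow (by fun_prop)
        (Or.inr fun t h => by simpa using congrArg re h)).aestronglyMeasurable
    · exact ((continuous_Zterm k).comp (by fun_prop)).aestronglyMeasurable
  · rw [norm_mul, norm_mul, hq]
    gcongr
    exact norm_Zterm_le hα hβ hγ hδ (hre t) k
  · simp only [tsum_mul_left]
    exact (hF.norm.mul_const _).mul_const _

theorem diagonal_eq_contour (q a b : ℕ) (hq : 0 < q) (hb : 0 < b)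
    (hab : Nat.Coprime a b) (α β γ δ : ℂ)
    (hα : |α.re| < 1/4) (hβ : |β.re| < 1/4) (hγ : |γ.re| < 1/4) (hδ : |δ.re| < 1/4)
    (G : ℂ → ℂ) (hG : Differentiable ℂ G) (hGdecay : ExpDecayStrips G) :
    Summable (fun p : ℕ × ℕ => if p.1 * a = p.2 * b then
        sigmaC α β p.1 * sigmaC γ δ p.2 * ((p.1 * p.2 : ℕ) : ℂ) ^ (-(1 : ℂ)/2) *
          Vfun G α β γ δ ((p.1 * p.2 : ℕ) / (q : ℝ) ^ 2) else 0) ∧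
    (∀ t : ℝ, Summable (Zterm α β γ δ a b (2 + t * I))) ∧
    (∑' p : ℕ × ℕ, if p.1 * a = p.2 * b then
        sigmaC α β p.1 * sigmaC γ δ p.2 * ((p.1 * p.2 : ℕ) : ℂ) ^ (-(1 : ℂ)/2) *
          Vfun G α β γ δ ((p.1 * p.2 : ℕ) / (q : ℝ) ^ 2) else 0) =
      (1 / (2 * (Real.pi : ℂ) * I)) *
        (I * ∫ t : ℝ, (G (2 + t * I) / (2 + t * I)) * gfun α β γ δ (2 + t * I) *
          (q : ℂ) ^ (2 * (2 + t * I)) * ∑' n : ℕ, Zterm α β γ δ a b (2 + t * I) n) := by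
  replace hα : -α.re ≤ 1/4 := by linarith [neg_abs_le α.re]
  replace hβ : -β.re ≤ 1/4 := by linarith [neg_abs_le β.re]
  replace hγ : -γ.re ≤ 1/4 := by linarith [neg_abs_le γ.re]
  replace hδ : -δ.re ≤ 1/4 := by linarith [neg_abs_le δ.re]
  refine (fun h => ⟨h.summable, fun t => summable_Zterm hα hβ hγ hδ (by simp), h.tsum_eq⟩)
    (?_ : HasSum _ _)
  have hdiag : Function.Injective fun k : ℕ => (b * k, a * k) := fun k l hkl =>
    Nat.eq_of_mul_eq_mul_left hb (Prod.ext_iff.1 hkl).1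
  rw [← hdiag.hasSum_iff fun p hp => if_neg fun h => hp <| by
    obtain ⟨k, hk⟩ := hab.exists_of_mul_eq_mul hb h
    exact ⟨k, Prod.ext hk.1 hk.2⟩]
  refine (((hasSum_integral_Zterm hα hβ hγ hδ q a b hG.continuous hGdecay).mul_left I).mul_left
    _).congr_fun fun k => ?_
  simp only [Function.comp_apply, if_pos (by ring : b * k * a = a * k * b)]
  exact diagonal_term_eq_integral hq α β γ δ a b G k
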